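/- There exists C>0 with the following property, for every k∈ℝ with |k|≥1 and all 2π-periodic functions below (norms: ‖g‖_{L^∞}=sup_{y}|g(y)|, ‖g‖_{L¹}=∫₀^{2π}|g(y)|dy). (1) If u∈C²(ℝ,ℂ) is 2π-periodic and h:=u''−k²u, then ‖u'‖_{L^∞}+|k|·‖u‖_{L^∞} ≤ C‖h‖_{L¹}. (2) Under the same assumptions, ‖u''‖_{L^∞}+|k|·‖u'‖_{L^∞}+k²‖u‖_{L^∞} ≤ C‖h‖_{L^∞}. (3) If moreover g∈C²(ℝ,ℂ) is 2π-periodic, f:=u''−k²u, and v∈C²(ℝ,ℂ) is 2π-periodic with v''−k²v=f·g, then ‖(v−gu)'‖_{L^∞}+|k|·‖v−gu‖_{L^∞} ≤ C‖u‖_{L^∞}‖g''‖_{L¹}; (4) ‖v'‖_{L^∞} ≤ C(‖u'‖_{L^∞}‖g‖_{L^∞}+‖u‖_{L^∞}‖g''‖_{L¹}); (5) ‖v‖_{L^∞} ≤ C‖u‖_{L^∞}(‖g‖_{L^∞}+|k|^{−1}‖g''‖_{L¹}). -/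

import Mathlib

/-!
For `k > 0` the operator `w'' - k² w` factors through `p = w' - k w` and `q = w' + k w`, which
solve `p' + k p = F` and `q' - k q = F` with `F = w'' - k² w`. The unique periodic solution of
the first is the convolution of `F` with the Green's function `e^{-ks} / (1 - e^{-2πk})` on
`(0, 2π]`, so `‖p‖_∞ ≤ (1 - e^{-2πk})⁻¹ ‖F‖_{L¹}`; a forcing term `k b` costs only `‖b‖_∞`
because the Green's function has integral `1/k`, and a forcing `B'` is absorbed by estimating
`p - B`. Time reversal handles `q`, and `w' = (p + q)/2`, `k w = (q - p)/2` give (1) and (2).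
For (3)–(5), `w = v - g u` solves `w'' - k² w = g'' u - 2 (g' u)'`, and `‖g'‖_∞ ≤ ‖g''‖_{L¹}`
since `g'` has mean zero over a period.
-/

open Real MeasureTheory

/-- The sup norm `‖g‖_{L^∞} = sup_y ‖g y‖` of a complex-valued function on `ℝ`. -/
noncomputable def supAbs (g : ℝ → ℂ) : ℝ := ⨆ y : ℝ, ‖g y‖

/-- The `L¹` norm over one period `[0,2π]` of a complex-valued function. -/
noncomputable def l1C (g : ℝ → ℂ) : ℝ := ∫ y in (0:ℝ)..(2*π), ‖g y‖

open Function

section Norms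

lemma supAbs_nonneg (f : ℝ → ℂ) : 0 ≤ supAbs f :=
  Real.iSup_nonneg fun _ => norm_nonneg _

lemma supAbs_le {f : ℝ → ℂ} {M : ℝ} (h : ∀ y, ‖f y‖ ≤ M) : supAbs f ≤ M :=
  ciSup_le h

lemma mul_supAbs_le {f : ℝ → ℂ} {c M : ℝ} (hc : 0 ≤ c) (h : ∀ y, c * ‖f y‖ ≤ M) :
    c * supAbs f ≤ M := by
  rw [supAbs, Real.mul_iSup_of_nonneg hc]
  exact ciSup_le h

lemma Function.Periodic.norm_le_supAbs {f : ℝ → ℂ} (hp : Periodic f (2 * π))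
    (hf : Continuous f) (y : ℝ) : ‖f y‖ ≤ supAbs f :=
  le_ciSup ((hp.comp norm).compact_of_continuous two_pi_pos.ne' hf.norm).bddAbove y

lemma l1C_nonneg (f : ℝ → ℂ) : 0 ≤ l1C f :=
  intervalIntegral.integral_nonneg two_pi_pos.le fun _ _ => norm_nonneg _

lemma Function.Periodic.integral_norm_eq_l1C {f : ℝ → ℂ} (hp : Periodic f (2 * π)) (x : ℝ) :
    ∫ s in x..x + 2 * π, ‖f s‖ = l1C f := by
  simpa [l1C] using (hp.comp norm).intervalIntegral_add_eq x 0

lemma Function.Periodic.l1C_neg_comp_neg {f : ℝ → ℂ} (hp : Periodic f (2 * π)) :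
    l1C (fun y => -f (-y)) = l1C f := by
  calc l1C (fun y => -f (-y)) = ∫ y in -(2 * π)..-0, ‖f y‖ := by
        simp only [l1C, norm_neg]
        exact intervalIntegral.integral_comp_neg fun y => ‖f y‖
    _ = l1C f := by rw [neg_zero, ← hp.integral_norm_eq_l1C (-(2 * π)), neg_add_cancel]

lemma l1C_mul_le {f u : ℝ → ℂ} {M : ℝ} (hf : Continuous f) (hu : Continuous u)
    (hM : ∀ y, ‖u y‖ ≤ M) : l1C (fun y => f y * u y) ≤ l1C f * M := by
  rw [l1C, l1C, ← intervalIntegral.integral_mul_const]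
  refine intervalIntegral.integral_mono_on two_pi_pos.le
    ((hf.mul hu).norm.intervalIntegrable _ _) ((hf.norm.mul_const M).intervalIntegrable _ _)
    fun y _ => ?_
  rw [norm_mul]
  exact mul_le_mul_of_nonneg_left (hM y) (norm_nonneg _)

end Norms

section Calculus

lemma Function.Periodic.deriv {f : ℝ → ℂ} {c : ℝ} (h : Periodic f c) : Periodic (deriv f) c := by
  intro x
  rw [← deriv_comp_add_const, h.funext]

variable {f : ℝ → ℂ}

lemma ContDiff.hasDerivAt_deriv (hf : ContDiff ℝ 2 f) (x : ℝ) : HasDerivAt f (deriv f x) x :=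
  (hf.differentiable two_ne_zero x).hasDerivAt

lemma ContDiff.hasDerivAt_deriv_deriv (hf : ContDiff ℝ 2 f) (x : ℝ) :
    HasDerivAt (deriv f) (deriv (deriv f) x) x :=
  ((hf.deriv' (n := 1)).differentiable one_ne_zero x).hasDerivAt

lemma ContDiff.continuous_deriv_deriv (hf : ContDiff ℝ 2 f) : Continuous (deriv (deriv f)) :=
  (hf.deriv' (n := 1)).continuous_deriv le_rfl

end Calculus

section FirstOrder

/-- The supremum of the periodic Green's function `s ↦ e^{-ks} / (1 - e^{-2πk})`, `0 < s ≤ 2π`,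
of `d/dx + k`. -/
noncomputable def greenConst (k : ℝ) : ℝ := (1 - exp (-(2 * π * k)))⁻¹

lemma greenConst_pos {k : ℝ} (hk : 0 < k) : 0 < greenConst k := by
  have : exp (-(2 * π * k)) < 1 := exp_lt_one_iff.mpr (by nlinarith [pi_pos])
  exact inv_pos.mpr (sub_pos.mpr this)

lemma greenConst_le_greenConst {k l : ℝ} (hk : 0 < k) (hkl : k ≤ l) :
    greenConst l ≤ greenConst k := by
  have : exp (-(2 * π * k)) < 1 := exp_lt_one_iff.mpr (by nlinarith [pi_pos])
  refine inv_anti₀ (sub_pos.mpr this) (sub_le_sub_left (exp_le_exp.mpr ?_) 1)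
  nlinarith [pi_pos]

lemma exp_mul_add_two_pi_eq {k : ℝ} (hk : 0 < k) (x : ℝ) :
    exp (k * (x + 2 * π)) = greenConst k * (exp (k * (x + 2 * π)) - exp (k * x)) := by
  have : exp (-(2 * π * k)) < 1 := exp_lt_one_iff.mpr (by nlinarith [pi_pos])
  have hx : exp (k * x) = exp (k * (x + 2 * π)) * exp (-(2 * π * k)) := by
    rw [← exp_add]; ring_nf
  rw [hx, greenConst, ← mul_one_sub, ← mul_assoc, mul_comm _ (exp _), mul_assoc,
    inv_mul_cancel₀ (sub_pos.mpr this).ne', mul_one]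

lemma hasDerivAt_ofReal_exp_mul (k x : ℝ) :
    HasDerivAt (fun s : ℝ => (exp (k * s) : ℂ)) (k * exp (k * x) : ℂ) x := by
  have := ((hasDerivAt_id x).const_mul k).exp.ofReal_comp
  simpa [mul_comm] using this

variable {k : ℝ}

lemma exp_sub_exp_mul_eq_integral {p h : ℝ → ℂ} (hp : ∀ x, HasDerivAt p (h x - k * p x) x)
    (hh : Continuous h) (hpp : Periodic p (2 * π)) (x : ℝ) :
    ((exp (k * (x + 2 * π)) - exp (k * x) : ℝ) : ℂ) * p x
      = ∫ s in x..x + 2 * π, (exp (k * s) : ℂ) * h s := by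
  have hF : ∀ s, HasDerivAt (fun t => (exp (k * t) : ℂ) * p t) ((exp (k * s) : ℂ) * h s) s :=
    fun s => ((hasDerivAt_ofReal_exp_mul k s).mul (hp s)).congr_deriv (by ring)
  have hcont : Continuous fun s => (exp (k * s) : ℂ) * h s := by fun_prop
  rw [intervalIntegral.integral_eq_sub_of_hasDerivAt (fun s _ => hF s)
    (hcont.intervalIntegrable _ _), hpp x]
  push_cast
  ring

lemma norm_integral_exp_mul_le (hk : 0 ≤ k) {α β : ℝ} (hαβ : α ≤ β) {f : ℝ → ℂ}
    (hf : Continuous f) :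
    ‖∫ s in α..β, (exp (k * s) : ℂ) * f s‖ ≤ exp (k * β) * ∫ s in α..β, ‖f s‖ := by
  rw [← intervalIntegral.integral_const_mul]
  refine intervalIntegral.norm_integral_le_of_norm_le hαβ (.of_forall fun s hs => ?_)
    ((continuous_const.mul hf.norm).intervalIntegrable _ _)
  rw [norm_mul, Complex.norm_real, norm_of_nonneg (exp_pos _).le]
  gcongr
  exact hs.2

lemma norm_integral_exp_mul_mul_le (hk : 0 ≤ k) {α β M : ℝ} (hαβ : α ≤ β) {b : ℝ → ℂ}
    (hb : ∀ s, ‖b s‖ ≤ M) :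
    ‖∫ s in α..β, (exp (k * s) : ℂ) * (k * b s)‖ ≤ M * (exp (k * β) - exp (k * α)) := by
  have hcont : Continuous fun s => k * exp (k * s) := by fun_prop
  have hint : ∫ s in α..β, M * (k * exp (k * s)) = M * (exp (k * β) - exp (k * α)) := by
    rw [intervalIntegral.integral_const_mul, intervalIntegral.integral_eq_sub_of_hasDerivAt
      (fun s _ => by simpa [mul_comm] using ((hasDerivAt_id s).const_mul k).exp)
      (hcont.intervalIntegrable _ _)]
  rw [← hint]
  refine intervalIntegral.norm_integral_le_of_norm_le hαβ (.of_forall fun s _ => ?_)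
    ((continuous_const.mul hcont).intervalIntegrable _ _)
  rw [norm_mul, norm_mul, Complex.norm_real, Complex.norm_real, norm_of_nonneg (exp_pos _).le,
    norm_of_nonneg hk]
  have := mul_le_mul_of_nonneg_left (hb s) (mul_nonneg hk (exp_pos (k * s)).le)
  linarith

theorem norm_le_of_hasDerivAt_eq_sub_mul (hk : 0 < k) {p a b : ℝ → ℂ} {M : ℝ}
    (hp : ∀ x, HasDerivAt p (a x - k * b x - k * p x) x) (ha : Continuous a)
    (hb : Continuous b) (hpa : Periodic a (2 * π)) (hpp : Periodic p (2 * π))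
    (hM : ∀ x, ‖b x‖ ≤ M) (x : ℝ) :
    ‖p x‖ ≤ greenConst k * l1C a + M := by
  set D := exp (k * (x + 2 * π)) - exp (k * x)
  have hD : 0 < D := sub_pos.mpr (exp_lt_exp.mpr (by nlinarith [pi_pos]))
  have hx : x ≤ x + 2 * π := by linarith [pi_pos]
  have hrep := exp_sub_exp_mul_eq_integral hp (ha.sub (continuous_const.mul hb)) hpp x
  have ha' : Continuous fun s => (exp (k * s) : ℂ) * a s := by fun_prop
  have hb' : Continuous fun s => (exp (k * s) : ℂ) * (k * b s) := by fun_prop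
  simp only [mul_sub] at hrep
  rw [intervalIntegral.integral_sub (ha'.intervalIntegrable _ _)
    (hb'.intervalIntegrable _ _)] at hrep
  have hbound : D * ‖p x‖ ≤ D * (greenConst k * l1C a + M) := by
    calc D * ‖p x‖ = ‖(D : ℂ) * p x‖ := by
          rw [norm_mul, Complex.norm_real, norm_of_nonneg hD.le]
      _ ≤ exp (k * (x + 2 * π)) * l1C a + M * D := by
          rw [hrep, ← hpa.integral_norm_eq_l1C x]
          exact (norm_sub_le _ _).trans (add_le_add (norm_integral_exp_mul_le hk.le hx ha)
            (norm_integral_exp_mul_mul_le hk.le hx hM))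
      _ = D * (greenConst k * l1C a + M) := by rw [exp_mul_add_two_pi_eq hk]; ring
  exact le_of_mul_le_mul_left hbound hD

theorem norm_le_of_hasDerivAt_eq_add_mul (hk : 0 < k) {q a b : ℝ → ℂ} {M : ℝ}
    (hq : ∀ x, HasDerivAt q (a x + k * b x + k * q x) x) (ha : Continuous a)
    (hb : Continuous b) (hpa : Periodic a (2 * π)) (hpq : Periodic q (2 * π))
    (hM : ∀ x, ‖b x‖ ≤ M) (x : ℝ) :
    ‖q x‖ ≤ greenConst k * l1C a + M := by
  have hrev : ∀ y, HasDerivAt (fun z => q (-z)) (-a (-y) - k * b (-y) - k * q (-y)) y :=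
    fun y => ((hq (-y)).scomp y (hasDerivAt_neg y)).congr_deriv (by simp; ring)
  have hper : ∀ {f : ℝ → ℂ}, Periodic f (2 * π) → Periodic (fun z => f (-z)) (2 * π) :=
    fun hf z => by simp only [neg_add, ← sub_eq_add_neg, hf.sub_eq]
  simpa [hpa.l1C_neg_comp_neg] using norm_le_of_hasDerivAt_eq_sub_mul hk hrev
    (ha.comp continuous_neg).neg (hb.comp continuous_neg) (fun z => congrArg Neg.neg (hper hpa z))
    (hper hpq) (fun y => hM (-y)) (-x)

end FirstOrder

theorem norm_deriv_le_and_mul_norm_le {k Mb MB : ℝ} (hk : 0 < k)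
    {w w' w'' a b B B' : ℝ → ℂ} (hw : ∀ x, HasDerivAt w (w' x) x)
    (hw' : ∀ x, HasDerivAt w' (w'' x) x) (hB : ∀ x, HasDerivAt B (B' x) x)
    (ha : Continuous a) (hb : Continuous b) (hpw : Periodic w (2 * π))
    (hpa : Periodic a (2 * π)) (hpB : Periodic B (2 * π))
    (heq : ∀ x, w'' x - (k : ℂ) ^ 2 * w x = a x - k * b x + B' x)
    (hMb : ∀ x, ‖b x‖ ≤ Mb) (hMB : ∀ x, ‖B x‖ ≤ MB) (x : ℝ) :
    ‖w' x‖ ≤ greenConst k * l1C a + Mb + 2 * MB ∧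
      k * ‖w x‖ ≤ greenConst k * l1C a + Mb + 2 * MB := by
  set K := greenConst k * l1C a + Mb + 2 * MB
  have hpw' : Periodic w' (2 * π) := by
    simpa only [funext fun x => (hw x).deriv] using hpw.deriv
  have hBc : Continuous B := continuous_iff_continuousAt.mpr fun x => (hB x).continuousAt
  have hP : ∀ y, ‖w' y - k * w y‖ ≤ K := by
    have hr := norm_le_of_hasDerivAt_eq_sub_mul hk
      (p := fun y => w' y - k * w y - B y) (b := fun y => b y + B y)
      (fun y => (((hw' y).sub ((hw y).const_mul _)).sub (hB y)).congr_deriv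
        (by linear_combination heq y))
      ha (hb.add hBc) hpa (fun y => by simp only [hpw' y, hpw y, hpB y])
      (fun y => (norm_add_le _ _).trans (add_le_add (hMb y) (hMB y)))
    intro y
    calc ‖w' y - k * w y‖ = ‖(w' y - k * w y - B y) + B y‖ := by ring_nf
      _ ≤ K := by linarith [norm_add_le (w' y - k * w y - B y) (B y), hr y, hMB y]
  have hQ : ∀ y, ‖w' y + k * w y‖ ≤ K := by
    have hr := norm_le_of_hasDerivAt_eq_add_mul hk
      (q := fun y => w' y + k * w y - B y) (b := fun y => B y - b y)
      (fun y => (((hw' y).add ((hw y).const_mul _)).sub (hB y)).congr_deriv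
        (by linear_combination heq y))
      ha (hBc.sub hb) hpa (fun y => by simp only [hpw' y, hpw y, hpB y])
      (fun y => (norm_sub_le _ _).trans (add_le_add (hMB y) (hMb y)))
    intro y
    calc ‖w' y + k * w y‖ = ‖(w' y + k * w y - B y) + B y‖ := by ring_nf
      _ ≤ K := by linarith [norm_add_le (w' y + k * w y - B y) (B y), hr y, hMB y]
  have htwo : ∀ z : ℂ, 2 * ‖z‖ = ‖2 * z‖ := fun z => by rw [norm_mul, Complex.norm_two]
  constructor
  · have : 2 * ‖w' x‖ ≤ 2 * K := by
      rw [htwo, show 2 * w' x = (w' x - k * w x) + (w' x + k * w x) by ring]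
      linarith [norm_add_le (w' x - k * w x) (w' x + k * w x), hP x, hQ x]
    linarith
  · have : 2 * ‖(k : ℂ) * w x‖ ≤ 2 * K := by
      rw [htwo, show 2 * (k * w x) = (w' x + k * w x) - (w' x - k * w x) by ring]
      linarith [norm_sub_le (w' x + k * w x) (w' x - k * w x), hP x, hQ x]
    rw [norm_mul, Complex.norm_real, norm_of_nonneg hk.le] at this
    linarith

lemma norm_deriv_le_l1C_deriv_deriv {g : ℝ → ℂ} (hg : ContDiff ℝ 2 g)
    (hpg : Periodic g (2 * π)) (x : ℝ) : ‖deriv g x‖ ≤ l1C (deriv (deriv g)) := by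
  have hx : x ≤ x + 2 * π := by linarith [pi_pos]
  have hg1 : Continuous (deriv g) := hg.continuous_deriv (by norm_num)
  have hosc : ∀ s ∈ Set.uIoc x (x + 2 * π), ‖deriv g x - deriv g s‖ ≤ l1C (deriv (deriv g)) := by
    intro s hs
    rw [Set.uIoc_of_le hx] at hs
    rw [norm_sub_rev, ← intervalIntegral.integral_eq_sub_of_hasDerivAt
      (fun t _ => hg.hasDerivAt_deriv_deriv t) (hg.continuous_deriv_deriv.intervalIntegrable _ _),
      ← hpg.deriv.deriv.integral_norm_eq_l1C x]
    refine (intervalIntegral.norm_integral_le_integral_norm hs.1.le).trans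
      (intervalIntegral.integral_mono_interval le_rfl hs.1.le hs.2 (.of_forall fun _ => ?_)
        (hg.continuous_deriv_deriv.norm.intervalIntegrable _ _))
    exact norm_nonneg _
  have hmean : ∫ s in x..x + 2 * π, deriv g s = 0 := by
    rw [intervalIntegral.integral_eq_sub_of_hasDerivAt (fun s _ => hg.hasDerivAt_deriv s)
      (hg1.intervalIntegrable _ _), hpg x, sub_self]
  have h2pi : ((2 * π : ℝ) : ℂ) * deriv g x = ∫ s in x..x + 2 * π, (deriv g x - deriv g s) := by
    rw [intervalIntegral.integral_sub intervalIntegrable_const (hg1.intervalIntegrable _ _),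
      hmean, intervalIntegral.integral_const, add_sub_cancel_left, Complex.real_smul, sub_zero]
  have := intervalIntegral.norm_integral_le_of_norm_le_const hosc
  rw [← h2pi, norm_mul, Complex.norm_real, norm_of_nonneg two_pi_pos.le, add_sub_cancel_left,
    abs_of_pos two_pi_pos, mul_comm] at this
  exact le_of_mul_le_mul_right this two_pi_pos

theorem supAbs_deriv_add_mul_supAbs_le {k C : ℝ} (hk : 0 < k) (hC : 2 * greenConst k ≤ C)
    {u : ℝ → ℂ} (hu : ContDiff ℝ 2 u) (hpu : Periodic u (2 * π)) :
    supAbs (deriv u) + k * supAbs u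
      ≤ C * l1C (fun y => deriv (deriv u) y - (k : ℂ) ^ 2 * u y) := by
  set h := fun y => deriv (deriv u) y - (k : ℂ) ^ 2 * u y
  have hbd := norm_deriv_le_and_mul_norm_le hk hu.hasDerivAt_deriv hu.hasDerivAt_deriv_deriv
    (fun x => hasDerivAt_const x (0 : ℂ)) (a := h) (b := fun _ => 0)
    (hu.continuous_deriv_deriv.sub (continuous_const.mul hu.continuous)) continuous_const hpu
    (fun y => by simp only [h, hpu.deriv.deriv y, hpu y]) (fun _ => rfl) (fun x => by ring)
    (Mb := 0) (fun _ => by simp) (MB := 0) (fun _ => by simp)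
  calc supAbs (deriv u) + k * supAbs u
      ≤ greenConst k * l1C h + greenConst k * l1C h := by
        refine add_le_add (supAbs_le fun x => ?_) (mul_supAbs_le hk.le fun x => ?_)
        · linarith [(hbd x).1]
        · linarith [(hbd x).2]
    _ ≤ C * l1C h := by linarith [mul_le_mul_of_nonneg_right hC (l1C_nonneg h)]

theorem supAbs_deriv_deriv_add_le {k C : ℝ} (hk : 0 < k) (hC : 4 ≤ C)
    {u : ℝ → ℂ} (hu : ContDiff ℝ 2 u) (hpu : Periodic u (2 * π)) :
    supAbs (deriv (deriv u)) + k * supAbs (deriv u) + k ^ 2 * supAbs u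
      ≤ C * supAbs (fun y => deriv (deriv u) y - (k : ℂ) ^ 2 * u y) := by
  set h := fun y => deriv (deriv u) y - (k : ℂ) ^ 2 * u y
  have hh : Continuous h := hu.continuous_deriv_deriv.sub (continuous_const.mul hu.continuous)
  have hhle := Periodic.norm_le_supAbs (f := h) (fun y => by
    simp only [h, hpu.deriv.deriv y, hpu y]) hh
  have hk' : (k : ℂ) ≠ 0 := Complex.ofReal_ne_zero.mpr hk.ne'
  have hbd := norm_deriv_le_and_mul_norm_le hk hu.hasDerivAt_deriv hu.hasDerivAt_deriv_deriv
    (fun x => hasDerivAt_const x (0 : ℂ)) (a := fun _ => 0) (b := fun y => -((k : ℂ)⁻¹ * h y))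
    continuous_const (by fun_prop) hpu (fun _ => rfl) (fun _ => rfl)
    (fun x => by simp only [h]; field_simp; ring)
    (Mb := k⁻¹ * supAbs h) (fun y => by
      rw [norm_neg, norm_mul, norm_inv, Complex.norm_real, norm_of_nonneg hk.le]
      exact mul_le_mul_of_nonneg_left (hhle y) (inv_nonneg.mpr hk.le))
    (MB := 0) (fun _ => by simp)
  have hl1 : l1C (fun _ => 0) = 0 := by simp [l1C]
  simp only [hl1, mul_zero, zero_add, add_zero] at hbd
  have hu' : ∀ y, k * ‖deriv u y‖ ≤ supAbs h := fun y => (le_inv_mul_iff₀ hk).mp (hbd y).1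
  have hu0 : ∀ y, k ^ 2 * ‖u y‖ ≤ supAbs h := fun y => by
    rw [pow_two, mul_assoc]; exact (le_inv_mul_iff₀ hk).mp (hbd y).2
  have hu'' : ∀ y, ‖deriv (deriv u) y‖ ≤ 2 * supAbs h := fun y => by
    have : deriv (deriv u) y = h y + (k : ℂ) ^ 2 * u y := by simp only [h]; ring
    rw [this, two_mul]
    refine (norm_add_le _ _).trans (add_le_add (hhle y) ?_)
    rw [norm_mul, norm_pow, Complex.norm_real, norm_eq_abs, sq_abs]
    exact hu0 y
  have := add_le_add (add_le_add (supAbs_le hu'') (mul_supAbs_le hk.le hu'))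
    (mul_supAbs_le (sq_nonneg k) hu0)
  linarith [mul_le_mul_of_nonneg_right hC (supAbs_nonneg h)]

section Product

variable {k : ℝ} {u g v : ℝ → ℂ}

theorem norm_le_of_deriv_deriv_sub_eq_mul (hk : 0 < k) (hu : ContDiff ℝ 2 u)
    (hpu : Periodic u (2 * π)) (hg : ContDiff ℝ 2 g) (hpg : Periodic g (2 * π))
    (hv : ContDiff ℝ 2 v) (hpv : Periodic v (2 * π))
    (hfv : ∀ y, deriv (deriv v) y - (k : ℂ) ^ 2 * v y
      = (deriv (deriv u) y - (k : ℂ) ^ 2 * u y) * g y) (x : ℝ) :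
    ‖deriv v x - (deriv g x * u x + g x * deriv u x)‖
        ≤ (greenConst k + 4) * supAbs u * l1C (deriv (deriv g)) ∧
      k * ‖v x - g x * u x‖ ≤ (greenConst k + 4) * supAbs u * l1C (deriv (deriv g)) := by
  have hule := hpu.norm_le_supAbs hu.continuous
  have hIg := l1C_nonneg (deriv (deriv g))
  have hMB : ∀ y, ‖-2 * (deriv g y * u y)‖ ≤ 2 * (l1C (deriv (deriv g)) * supAbs u) := by
    intro y
    rw [norm_mul, norm_mul, norm_neg, Complex.norm_two]
    gcongr
    exacts [norm_deriv_le_l1C_deriv_deriv hg hpg y, hule y]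
  have hbd := norm_deriv_le_and_mul_norm_le hk (w := fun y => v y - g y * u y)
    (B := fun y => -2 * (deriv g y * u y))
    (fun y => (hv.hasDerivAt_deriv y).sub ((hg.hasDerivAt_deriv y).mul (hu.hasDerivAt_deriv y)))
    (fun y => (hv.hasDerivAt_deriv_deriv y).sub
      (((hg.hasDerivAt_deriv_deriv y).mul (hu.hasDerivAt_deriv y)).add
        ((hg.hasDerivAt_deriv y).mul (hu.hasDerivAt_deriv_deriv y))))
    (fun y => ((hg.hasDerivAt_deriv_deriv y).mul (hu.hasDerivAt_deriv y)).const_mul (-2))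
    (a := fun y => deriv (deriv g) y * u y) (b := fun _ => 0)
    (hg.continuous_deriv_deriv.mul hu.continuous) continuous_const
    (fun y => by simp only [hpv y, hpg y, hpu y])
    (fun y => by simp only [hpg.deriv.deriv y, hpu y])
    (fun y => by simp only [hpg.deriv y, hpu y])
    (fun y => by linear_combination hfv y) (Mb := 0) (fun _ => by simp) hMB x
  have hl1 := mul_le_mul_of_nonneg_left
    (l1C_mul_le hg.continuous_deriv_deriv hu.continuous hule) (greenConst_pos hk).le
  constructor <;> linarith [hbd.1, hbd.2]

theorem supAbs_le_of_deriv_deriv_sub_eq_mul {C : ℝ} (hk : 0 < k)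
    (hC : 2 * (greenConst k + 4) ≤ C) (hu : ContDiff ℝ 2 u) (hpu : Periodic u (2 * π))
    (hg : ContDiff ℝ 2 g) (hpg : Periodic g (2 * π)) (hv : ContDiff ℝ 2 v)
    (hpv : Periodic v (2 * π))
    (hfv : ∀ y, deriv (deriv v) y - (k : ℂ) ^ 2 * v y
      = (deriv (deriv u) y - (k : ℂ) ^ 2 * u y) * g y) :
    supAbs (deriv (fun y => v y - g y * u y)) + k * supAbs (fun y => v y - g y * u y)
        ≤ C * supAbs u * l1C (deriv (deriv g)) ∧
      supAbs (deriv v)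
        ≤ C * (supAbs (deriv u) * supAbs g + supAbs u * l1C (deriv (deriv g))) ∧
      supAbs v ≤ C * supAbs u * (supAbs g + k⁻¹ * l1C (deriv (deriv g))) := by
  have hbd := norm_le_of_deriv_deriv_sub_eq_mul hk hu hpu hg hpg hv hpv hfv
  have hg1 := greenConst_pos hk
  have hMu := supAbs_nonneg u
  have hMu' := supAbs_nonneg (deriv u)
  have hMg := supAbs_nonneg g
  have hIg := l1C_nonneg (deriv (deriv g))
  have hule := hpu.norm_le_supAbs hu.continuous
  have hu'le := hpu.deriv.norm_le_supAbs (hu.continuous_deriv (by norm_num))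
  have hgle := hpg.norm_le_supAbs hg.continuous
  have hg'le := norm_deriv_le_l1C_deriv_deriv hg hpg
  have hderiv : deriv (fun y => v y - g y * u y)
      = fun y => deriv v y - (deriv g y * u y + g y * deriv u y) := funext fun y =>
    ((hv.hasDerivAt_deriv y).sub ((hg.hasDerivAt_deriv y).mul (hu.hasDerivAt_deriv y))).deriv
  refine ⟨?_, supAbs_le fun y => ?_, supAbs_le fun y => ?_⟩
  · have := add_le_add (supAbs_le fun y => (hbd y).1) (mul_supAbs_le hk.le fun y => (hbd y).2)
    rw [← hderiv] at this
    linarith [mul_le_mul_of_nonneg_right hC (mul_nonneg hMu hIg)]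
  · have hprod := add_le_add (mul_le_mul (hg'le y) (hule y) (norm_nonneg _) hIg)
      (mul_le_mul (hgle y) (hu'le y) (norm_nonneg _) hMg)
    calc ‖deriv v y‖
        ≤ ‖deriv v y - (deriv g y * u y + g y * deriv u y)‖
          + (‖deriv g y‖ * ‖u y‖ + ‖g y‖ * ‖deriv u y‖) := by
          rw [← norm_mul, ← norm_mul]
          refine (norm_le_norm_sub_add _ (deriv g y * u y + g y * deriv u y)).trans ?_
          gcongr
          exact norm_add_le _ _
      _ ≤ C * (supAbs (deriv u) * supAbs g + supAbs u * l1C (deriv (deriv g))) := by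
          nlinarith [(hbd y).1, mul_le_mul_of_nonneg_right hC (mul_nonneg hMu hIg),
            mul_le_mul_of_nonneg_right hC (mul_nonneg hMu' hMg),
            mul_nonneg hg1.le (mul_nonneg hMu hIg), mul_nonneg hg1.le (mul_nonneg hMu' hMg)]
  · have hki : 0 ≤ k⁻¹ := inv_nonneg.mpr hk.le
    have hw : ‖v y - g y * u y‖
        ≤ (greenConst k + 4) * (supAbs u * (k⁻¹ * l1C (deriv (deriv g)))) :=
      ((le_inv_mul_iff₀ hk).mpr (hbd y).2).trans_eq (by ring)
    calc ‖v y‖ ≤ ‖v y - g y * u y‖ + ‖g y‖ * ‖u y‖ := by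
          rw [← norm_mul]; exact norm_le_norm_sub_add _ _
      _ ≤ C * supAbs u * (supAbs g + k⁻¹ * l1C (deriv (deriv g))) := by
          nlinarith [mul_le_mul (hgle y) (hule y) (norm_nonneg _) hMg,
            mul_le_mul_of_nonneg_right hC (mul_nonneg hMu (mul_nonneg hki hIg)),
            mul_le_mul_of_nonneg_right hC (mul_nonneg hMu hMg),
            mul_nonneg hg1.le (mul_nonneg hMu hMg),
            mul_nonneg hg1.le (mul_nonneg hMu (mul_nonneg hki hIg))]

end Product

theorem stmt18 :
    ∃ C : ℝ, 0 < C ∧ ∀ (k : ℝ), 1 ≤ |k| →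
      (∀ (u : ℝ → ℂ), ContDiff ℝ 2 u → Function.Periodic u (2*π) →
        (supAbs (deriv u) + |k| * supAbs u
            ≤ C * l1C (fun y => deriv (deriv u) y - (k:ℂ)^2 * u y)) ∧
        (supAbs (deriv (deriv u)) + |k| * supAbs (deriv u) + k^2 * supAbs u
            ≤ C * supAbs (fun y => deriv (deriv u) y - (k:ℂ)^2 * u y))) ∧
      (∀ (u g v : ℝ → ℂ), ContDiff ℝ 2 u → Function.Periodic u (2*π) →
        ContDiff ℝ 2 g → Function.Periodic g (2*π) →
        ContDiff ℝ 2 v → Function.Periodic v (2*π) →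
        (∀ y : ℝ, deriv (deriv v) y - (k:ℂ)^2 * v y
            = (deriv (deriv u) y - (k:ℂ)^2 * u y) * g y) →
        (supAbs (deriv (fun y => v y - g y * u y)) + |k| * supAbs (fun y => v y - g y * u y)
            ≤ C * supAbs u * l1C (deriv (deriv g))) ∧
        (supAbs (deriv v)
            ≤ C * (supAbs (deriv u) * supAbs g + supAbs u * l1C (deriv (deriv g)))) ∧
        (supAbs v ≤ C * supAbs u * (supAbs g + |k|⁻¹ * l1C (deriv (deriv g))))) := by
  have hg1 := greenConst_pos one_pos
  refine ⟨2 * (greenConst 1 + 4), by linarith, fun k hk => ?_⟩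
  have hκ : 0 < |k| := one_pos.trans_le hk
  have hC := greenConst_le_greenConst one_pos hk
  have hsq : ((|k| : ℝ) : ℂ) ^ 2 = (k : ℂ) ^ 2 := by
    rw [← Complex.ofReal_pow, sq_abs, Complex.ofReal_pow]
  refine ⟨fun u hu hpu => ⟨?_, ?_⟩, fun u g v hu hpu hg hpg hv hpv hfv => ?_⟩
  · simpa only [hsq] using supAbs_deriv_add_mul_supAbs_le hκ (by linarith) hu hpu
  · simpa only [hsq, sq_abs] using supAbs_deriv_deriv_add_le hκ (by linarith) hu hpu
  · exact supAbs_le_of_deriv_deriv_sub_eq_mul hκ (by linarith) hu hpu hg hpg hv hpv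
      (by simpa only [hsq] using hfv)
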